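/- arXiv:2002.05556 — 5 statements merged into one kernel-verified Lean document; each statement's English description precedes it below -/
import Mathlib

section
/- The sparsemax solution has the thresholded form: there exists τ ∈ R such that sparsemax(z)_i = max(z_i − τ, 0) for all i, where τ satisfies Σ_i max(z_i − τ, 0) = 1. -/
private lemma sum_apply_update {k : ℕ} (f : Fin k → ℝ) (g : Fin k → ℝ → ℝ)
    (i : Fin k) (a : ℝ) :
    ∑ m, g m (Function.update f i a m) = ∑ m, g m (f m) - g i (f i) + g i a := by
  have h : (fun m => g m (Function.update f i a m))
      = Function.update (fun m => g m (f m)) i (g i a) :=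
    funext fun m => Function.apply_update g f i a m
  calc ∑ m, g m (Function.update f i a m)
      = ∑ m, Function.update (fun m => g m (f m)) i (g i a) m := by rw [h]
    _ = _ := by
        rw [Finset.sum_update_of_mem (Finset.mem_univ i),
          Finset.sum_sdiff_eq_sub (Finset.subset_univ {i}), Finset.sum_singleton]
        ring

private lemma key_ineq {k : ℕ} (z p : Fin k → ℝ)
    (h1 : ∀ i, 0 ≤ p i) (h2 : ∑ i, p i = 1)
    (hmin : ∀ q : Fin k → ℝ, ((∀ i, 0 ≤ q i) ∧ ∑ i, q i = 1) →
        (1 / 2) * ∑ i, (p i - z i) ^ 2 ≤ (1 / 2) * ∑ i, (q i - z i) ^ 2)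
    {i j : Fin k} (hij : j ≠ i) (hpi : 0 < p i) :
    p i - z i ≤ p j - z j := by
  by_contra hA
  push_neg at hA
  set A := (p i - z i) - (p j - z j) with hAdef
  have hApos : 0 < A := by simp only [hAdef]; linarith
  set ε := min (A / 2) (p i) with hε
  have hεpos : 0 < ε := lt_min (by linarith) hpi
  have hεle : ε ≤ p i := min_le_right _ _
  have hεA : ε ≤ A / 2 := min_le_left _ _
  set q := Function.update (Function.update p i (p i - ε)) j (p j + ε) with hq
  have hupd : Function.update p i (p i - ε) j = p j := Function.update_of_ne hij _ _
  have hqfeas : (∀ m, 0 ≤ q m) ∧ ∑ m, q m = 1 := by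
    constructor
    · intro m
      rcases eq_or_ne m j with rfl | hmj
      · have : q m = p m + ε := by simp [hq]
        rw [this]; have := h1 m; linarith
      · have h' : q m = Function.update p i (p i - ε) m := Function.update_of_ne hmj _ _
        rcases eq_or_ne m i with rfl | hmi
        · rw [h', Function.update_self]; linarith
        · rw [h', Function.update_of_ne hmi]; exact h1 m
    · have s1 : ∑ m, q m
          = (∑ m, Function.update p i (p i - ε) m) - p j + (p j + ε) := by
        have := sum_apply_update (Function.update p i (p i - ε)) (fun _ x => x) j (p j + ε)
        simpa [hq, hupd] using this
      have s2 : ∑ m, Function.update p i (p i - ε) m = (∑ m, p m) - p i + (p i - ε) := by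
        simpa using sum_apply_update p (fun _ x => x) i (p i - ε)
      rw [s1, s2, h2]; ring
  have hle := hmin q hqfeas
  have s1 : ∑ m, (q m - z m) ^ 2
      = (∑ m, (Function.update p i (p i - ε) m - z m) ^ 2)
        - (p j - z j) ^ 2 + (p j + ε - z j) ^ 2 := by
    have := sum_apply_update (Function.update p i (p i - ε))
      (fun m x => (x - z m) ^ 2) j (p j + ε)
    simpa [hq, hupd] using this
  have s2 : ∑ m, (Function.update p i (p i - ε) m - z m) ^ 2
      = (∑ m, (p m - z m) ^ 2) - (p i - z i) ^ 2 + (p i - ε - z i) ^ 2 := by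
    simpa using sum_apply_update p (fun m x => (x - z m) ^ 2) i (p i - ε)
  rw [s1, s2] at hle
  nlinarith [hεpos, hεA, hApos, sq_nonneg ε]

/-- Thresholded form of sparsemax: there is `τ` with
`sparsemax(z)_i = max (z_i − τ) 0` and `∑_i max (z_i − τ) 0 = 1`. -/
theorem sparsemax_threshold_form {k : ℕ} (z p : Fin k → ℝ)
    (hp : ((∀ i, 0 ≤ p i) ∧ ∑ i, p i = 1) ∧
      ∀ q : Fin k → ℝ, ((∀ i, 0 ≤ q i) ∧ ∑ i, q i = 1) →
        (1 / 2) * ∑ i, (p i - z i) ^ 2 ≤ (1 / 2) * ∑ i, (q i - z i) ^ 2) :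
    ∃ τ : ℝ, (∀ i, p i = max (z i - τ) 0) ∧ ∑ i, max (z i - τ) 0 = 1 := by
  obtain ⟨⟨h1, h2⟩, hmin⟩ := hp
  -- support is nonempty
  have hex : ∃ i, 0 < p i := by
    by_contra h
    push_neg at h
    have : ∀ i, p i = 0 := fun i => le_antisymm (h i) (h1 i)
    rw [Finset.sum_congr rfl (fun i _ => this i)] at h2
    simp at h2
  obtain ⟨i0, hi0⟩ := hex
  have hform : ∀ i, p i = max (z i - (z i0 - p i0)) 0 := by
    intro i
    rcases lt_or_eq_of_le (h1 i) with hpos | hzero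
    · -- p i > 0 : both inequalities give equality
      rcases eq_or_ne i i0 with rfl | hne
      · rw [max_eq_left]; ring_nf; linarith
      · have ha := key_ineq z p h1 h2 hmin hne hi0
        have hb := key_ineq z p h1 h2 hmin hne.symm hpos
        have heq : p i - z i = p i0 - z i0 := le_antisymm hb ha
        rw [max_eq_left (by linarith)]
        linarith
    · -- p i = 0
      have hne : i ≠ i0 := by
        intro h; rw [h] at hzero; linarith
      have ha := key_ineq z p h1 h2 hmin hne hi0
      rw [← hzero] at ha ⊢
      rw [max_eq_right (by linarith)]
  refine ⟨z i0 - p i0, hform, ?_⟩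
  rw [← h2]
  exact Finset.sum_congr rfl fun i _ => (hform i).symm
end

section
/- Generalized fusedmax decomposes as projection composed with proximal operator: argmin_{p ∈ Δ^k} (1/2)||p − x||² + λΩ_E(p) = proj_{Δ^k}(prox_{λΩ_E}(x)), where Δ^k is the probability simplex. -/
/-- If `0 ≤ S + t * V` for all sufficiently small positive `t` (with `V ≥ 0`),
then `0 ≤ S`. -/
private lemma aux_nonneg (S V t₀ : ℝ) (hV : 0 ≤ V) (ht₀ : 0 < t₀)
    (h : ∀ t : ℝ, 0 < t → t ≤ t₀ → 0 ≤ S + t * V) : 0 ≤ S := by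
  by_contra hS
  push_neg at hS
  have hV1 : (0:ℝ) < V + 1 := by linarith
  have hpos : 0 < -S / (V + 1) := div_pos (by linarith) hV1
  set t := min t₀ (-S / (V + 1)) with ht
  have ht1 : 0 < t := lt_min ht₀ hpos
  have h3 : t ≤ -S / (V + 1) := min_le_right _ _
  have h4 : t * (V + 1) ≤ -S := (le_div_iff₀ hV1).mp h3
  have := h t ht1 (min_le_left _ _)
  nlinarith

/-- Per-edge inequality: if the fused differences of `q` are sign-compatible with
those of `w`, and `t` is small enough, then
`|a + t(c-b)| ≤ |a| + t(|c| - |b|)`. -/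
private lemma edge_ineq (a b c t : ℝ) (ht : 0 < t) (hab0 : a = 0 → b = 0)
    (habp : 0 < a → 0 ≤ b) (habn : a < 0 → b ≤ 0)
    (hta : a ≠ 0 → t * |c - b| < |a|) :
    |a + t * (c - b)| ≤ |a| + t * (|c| - |b|) := by
  rcases lt_trichotomy a 0 with h | h | h
  · have hb : b ≤ 0 := habn h
    have hd : t * (c - b) ≤ t * |c - b| := by
      have := le_abs_self (c - b); nlinarith
    have hlt : t * |c - b| < -a := by
      have := hta (ne_of_lt h); rwa [abs_of_neg h] at this
    have hneg : a + t * (c - b) < 0 := by linarith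
    rw [abs_of_neg hneg, abs_of_neg h, abs_of_nonpos hb]
    have hc := neg_abs_le c
    nlinarith
  · have hb := hab0 h
    subst h hb
    simp only [zero_add, sub_zero, abs_zero]
    rw [abs_mul, abs_of_pos ht]
  · have hb : 0 ≤ b := habp h
    have hd : -(t * (c - b)) ≤ t * |c - b| := by
      have := neg_abs_le (c - b); nlinarith
    have hlt : t * |c - b| < a := by
      have := hta (ne_of_gt h); rwa [abs_of_pos h] at this
    have hposn : 0 < a + t * (c - b) := by linarith
    rw [abs_of_pos hposn, abs_of_pos h, abs_of_nonneg hb]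
    have hc := le_abs_self c
    nlinarith

/-- Generalized fusedmax decomposes as simplex projection composed with the fused
lasso proximal operator:
`argmin_{p ∈ Δ} (1/2)‖p − x‖² + λΩ_E(p) = proj_Δ (prox_{λΩ_E}(x))`. -/
theorem gfusedmax_eq_proj_comp_prox {k : ℕ} (E : Finset (Fin k × Fin k))
    (hE : ∀ e ∈ E, e.1 < e.2) (lam : ℝ) (hlam : 0 ≤ lam) (x p w q : Fin k → ℝ)
    -- `p` is the constrained minimizer (gfusedmax)
    (hp : ((∀ i, 0 ≤ p i) ∧ ∑ i, p i = 1) ∧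
      ∀ r : Fin k → ℝ, ((∀ i, 0 ≤ r i) ∧ ∑ i, r i = 1) →
        (1 / 2) * ∑ i, (p i - x i) ^ 2 + lam * ∑ e ∈ E, |p e.1 - p e.2| ≤
        (1 / 2) * ∑ i, (r i - x i) ^ 2 + lam * ∑ e ∈ E, |r e.1 - r e.2|)
    -- `w` is the unconstrained prox
    (hw : ∀ u : Fin k → ℝ,
      (1 / 2) * ∑ i, (w i - x i) ^ 2 + lam * ∑ e ∈ E, |w e.1 - w e.2| ≤
      (1 / 2) * ∑ i, (u i - x i) ^ 2 + lam * ∑ e ∈ E, |u e.1 - u e.2|)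
    -- `q` is the Euclidean projection of `w` onto the simplex
    (hq : ((∀ i, 0 ≤ q i) ∧ ∑ i, q i = 1) ∧
      ∀ r : Fin k → ℝ, ((∀ i, 0 ≤ r i) ∧ ∑ i, r i = 1) →
        (1 / 2) * ∑ i, (q i - w i) ^ 2 ≤ (1 / 2) * ∑ i, (r i - w i) ^ 2) :
    p = q := by
  obtain ⟨⟨hpnn, hpsum⟩, hpmin⟩ := hp
  obtain ⟨⟨hqnn, hqsum⟩, hqmin⟩ := hq
  -- Step 1: variational inequality for the projection `q`.
  have hproj : ∀ r : Fin k → ℝ, ((∀ i, 0 ≤ r i) ∧ ∑ i, r i = 1) →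
      0 ≤ ∑ i, (q i - w i) * (r i - q i) := by
    intro r hr
    apply aux_nonneg _ ((∑ i, (r i - q i) ^ 2) / 2) 1 (by positivity) one_pos
    intro t ht0 ht1
    have hmem : ((∀ i, 0 ≤ q i + t * (r i - q i)) ∧ ∑ i, (q i + t * (r i - q i)) = 1) := by
      constructor
      · intro i
        have h1 : q i + t * (r i - q i) = (1 - t) * q i + t * r i := by ring
        rw [h1]
        have := hqnn i; have := hr.1 i
        nlinarith
      · have h2 : ∀ i ∈ Finset.univ, q i + t * (r i - q i)
            = (1 - t) * q i + t * r i := fun i _ => by ring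
        rw [Finset.sum_congr rfl h2, Finset.sum_add_distrib, ← Finset.mul_sum,
          ← Finset.mul_sum, hqsum, hr.2]
        ring
    have hle := hqmin _ hmem
    have hexp : ∑ i, (q i + t * (r i - q i) - w i) ^ 2
        = ∑ i, (q i - w i) ^ 2 + 2 * t * ∑ i, (q i - w i) * (r i - q i)
          + t ^ 2 * ∑ i, (r i - q i) ^ 2 := by
      rw [Finset.mul_sum, Finset.mul_sum, ← Finset.sum_add_distrib, ← Finset.sum_add_distrib]
      exact Finset.sum_congr rfl fun i _ => by ring
    rw [hexp] at hle
    nlinarith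
  -- Step 2: the projection preserves the order of the coordinates of `w`.
  have hmono : ∀ i j : Fin k, w i ≤ w j → q i ≤ q j := by
    intro i j hwij
    rcases eq_or_ne i j with rfl | hij
    · exact le_refl _
    by_contra hcon
    push_neg at hcon
    set r : Fin k → ℝ := fun m => q (Equiv.swap i j m) with hr
    have hri : r i = q j := by simp [hr]
    have hrj : r j = q i := by simp [hr]
    have hrm : ∀ m, m ≠ i → m ≠ j → r m = q m := by
      intro m h1 h2
      simp [hr, Equiv.swap_apply_of_ne_of_ne h1 h2]
    have hrmem : (∀ m, 0 ≤ r m) ∧ ∑ m, r m = 1 := by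
      refine ⟨fun m => hqnn _, ?_⟩
      rw [hr, ← hqsum]
      exact Fintype.sum_equiv (Equiv.swap i j) _ _ (fun m => rfl)
    have hS := hproj r hrmem
    have hsum : ∑ m, (q m - w m) * (r m - q m)
        = (q i - w i) * (r i - q i) + (q j - w j) * (r j - q j) := by
      have hzero : ∀ m ∈ Finset.univ, m ∉ ({i, j} : Finset (Fin k)) →
          (q m - w m) * (r m - q m) = 0 := by
        intro m _ hm
        simp only [Finset.mem_insert, Finset.mem_singleton, not_or] at hm
        rw [hrm m hm.1 hm.2]
        ring
      rw [← Finset.sum_subset (Finset.subset_univ {i, j}) hzero, Finset.sum_pair hij]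
    rw [hsum, hri, hrj] at hS
    nlinarith
  have heq : ∀ i j : Fin k, w i = w j → q i = q j := fun i j h =>
    le_antisymm (hmono i j h.le) (hmono j i h.ge)
  -- Step 3: directional optimality of the prox `w`, transported to `q`.
  have hgrad : ∀ r : Fin k → ℝ,
      0 ≤ ∑ i, (w i - x i) * (r i - q i)
        + lam * ((∑ e ∈ E, |r e.1 - r e.2|) - ∑ e ∈ E, |q e.1 - q e.2|) := by
    intro r
    set ε : Fin k × Fin k → ℝ := fun e =>
      if w e.1 = w e.2 then 1
      else |w e.1 - w e.2| / (|(r e.1 - r e.2) - (q e.1 - q e.2)| + 1) with hε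
    set T : Finset ℝ := insert (1 : ℝ) (E.image ε) with hT
    have hTne : T.Nonempty := Finset.insert_nonempty _ _
    set t₀ : ℝ := T.min' hTne with ht₀
    have hεpos : ∀ e, 0 < ε e := by
      intro e
      rw [hε]
      dsimp only
      split
      · exact one_pos
      · next h =>
        have : w e.1 - w e.2 ≠ 0 := sub_ne_zero.mpr h
        positivity
    have ht₀pos : 0 < t₀ := by
      rw [ht₀, Finset.lt_min'_iff]
      intro y hy
      rw [hT, Finset.mem_insert, Finset.mem_image] at hy
      rcases hy with rfl | ⟨e, _, rfl⟩
      · exact one_pos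
      · exact hεpos e
    have ht₀le : ∀ e ∈ E, t₀ ≤ ε e := fun e he =>
      Finset.min'_le _ _ (Finset.mem_insert_of_mem (Finset.mem_image_of_mem ε he))
    apply aux_nonneg _ ((∑ i, (r i - q i) ^ 2) / 2) t₀ (by positivity) ht₀pos
    intro t ht0 htle
    have habs : ∑ e ∈ E, |(w e.1 + t * (r e.1 - q e.1)) - (w e.2 + t * (r e.2 - q e.2))|
        ≤ ∑ e ∈ E, |w e.1 - w e.2|
          + t * ((∑ e ∈ E, |r e.1 - r e.2|) - ∑ e ∈ E, |q e.1 - q e.2|) := by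
      have step : ∀ e ∈ E, |(w e.1 + t * (r e.1 - q e.1)) - (w e.2 + t * (r e.2 - q e.2))|
          ≤ |w e.1 - w e.2| + t * (|r e.1 - r e.2| - |q e.1 - q e.2|) := by
        intro e he
        have key : (w e.1 + t * (r e.1 - q e.1)) - (w e.2 + t * (r e.2 - q e.2))
            = (w e.1 - w e.2) + t * ((r e.1 - r e.2) - (q e.1 - q e.2)) := by ring
        rw [key]
        apply edge_ineq _ _ _ _ ht0
        · intro h
          have := heq e.1 e.2 (by linarith [sub_eq_zero.mp h])
          linarith
        · intro h
          have := hmono e.2 e.1 (by linarith)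
          linarith
        · intro h
          have := hmono e.1 e.2 (by linarith)
          linarith
        · intro h
          have hεe : ε e = |w e.1 - w e.2| / (|(r e.1 - r e.2) - (q e.1 - q e.2)| + 1) := by
            rw [hε]
            dsimp only
            rw [if_neg (fun hc => h (sub_eq_zero.mpr hc))]
          have h1 : t ≤ ε e := le_trans htle (ht₀le e he)
          rw [hεe] at h1
          set d := |(r e.1 - r e.2) - (q e.1 - q e.2)| with hd
          have hd0 : 0 ≤ d := abs_nonneg _
          have ha0 : 0 < |w e.1 - w e.2| := abs_pos.mpr h
          have h2 : t * (d + 1) ≤ |w e.1 - w e.2| := (le_div_iff₀ (by linarith)).mp h1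
          nlinarith
      calc ∑ e ∈ E, |(w e.1 + t * (r e.1 - q e.1)) - (w e.2 + t * (r e.2 - q e.2))|
          ≤ ∑ e ∈ E, (|w e.1 - w e.2| + t * (|r e.1 - r e.2| - |q e.1 - q e.2|)) :=
            Finset.sum_le_sum step
        _ = _ := by
            rw [Finset.sum_add_distrib]
            congr 1
            rw [← Finset.sum_sub_distrib, Finset.mul_sum]
    have hle := hw (fun i => w i + t * (r i - q i))
    have hexp : ∑ i, (w i + t * (r i - q i) - x i) ^ 2
        = ∑ i, (w i - x i) ^ 2 + 2 * t * ∑ i, (w i - x i) * (r i - q i)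
          + t ^ 2 * ∑ i, (r i - q i) ^ 2 := by
      rw [Finset.mul_sum, Finset.mul_sum, ← Finset.sum_add_distrib, ← Finset.sum_add_distrib]
      exact Finset.sum_congr rfl fun i _ => by ring
    rw [hexp] at hle
    have hmul := mul_le_mul_of_nonneg_left habs hlam
    nlinarith
  -- Step 4: combine everything with `r = p`.
  have h1 := hproj p ⟨hpnn, hpsum⟩
  have h2 := hgrad p
  have h3 := hpmin q ⟨hqnn, hqsum⟩
  have hiden : ∑ i, (p i - x i) ^ 2
      = ∑ i, (q i - x i) ^ 2 + 2 * ∑ i, (q i - w i) * (p i - q i)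
        + 2 * ∑ i, (w i - x i) * (p i - q i) + ∑ i, (p i - q i) ^ 2 := by
    rw [Finset.mul_sum, Finset.mul_sum, ← Finset.sum_add_distrib, ← Finset.sum_add_distrib,
      ← Finset.sum_add_distrib]
    exact Finset.sum_congr rfl fun i _ => by ring
  rw [hiden] at h3
  have hzero : ∑ i, (p i - q i) ^ 2 ≤ 0 := by linarith
  have hall : ∀ i ∈ Finset.univ, (p i - q i) ^ 2 = 0 := by
    rw [← Finset.sum_eq_zero_iff_of_nonneg (fun i _ => sq_nonneg (p i - q i))]
    exact le_antisymm hzero (Finset.sum_nonneg fun i _ => sq_nonneg _)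
  funext i
  have := hall i (Finset.mem_univ i)
  have := pow_eq_zero_iff (n := 2) (by norm_num) |>.mp this
  linarith [sub_eq_zero.mp this]
end

section
/- Group-wise value formula for the fused lasso proximal operator: let w* = prox_{λΩ_E}(x) and let G be a fused group (a connected set of indices on which w* is constant, maximal with respect to the fusion relation). Then for any i ∈ G, w*_i = (1/|G|) Σ_{j∈G} ( x_j + λ Σ_{(m,j)∈E, m∉G} s_{mj} − λ Σ_{(j,m)∈E, m∉G} s_{jm} ), where s_{ab} = sgn(w*_a − w*_b). -/
private lemma abs_lin_aux (d t : ℝ) (hd : d ≠ 0) (ht : |t| ≤ |d|) :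
    |d + t| = |d| + t * Real.sign d := by
  obtain ⟨h1, h2⟩ := abs_le.mp ht
  rcases hd.lt_or_gt with h | h
  · rw [Real.sign_of_neg h, abs_of_neg h] at *
    rw [abs_of_nonpos (by linarith)]; ring
  · rw [Real.sign_of_pos h, abs_of_pos h] at *
    rw [abs_of_nonneg (by linarith)]; ring


/-- Group-wise value formula for the fused lasso proximal operator: on a fused group
`G` (the maximal set of indices connected to `i` through edges along which `w` takes
equal values), the solution equals the group average of the inputs corrected by the
boundary subgradient signs. -/
theorem fused_lasso_group_formula {k : ℕ} (E : Finset (Fin k × Fin k))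
    (hE : ∀ e ∈ E, e.1 < e.2) (lam : ℝ) (hlam : 0 ≤ lam) (x w : Fin k → ℝ)
    (hw : ∀ u : Fin k → ℝ,
      (1 / 2) * ∑ i, (w i - x i) ^ 2 + lam * ∑ e ∈ E, |w e.1 - w e.2| ≤
      (1 / 2) * ∑ i, (u i - x i) ^ 2 + lam * ∑ e ∈ E, |u e.1 - u e.2|)
    (i : Fin k) (G : Finset (Fin k))
    (hG : ∀ j, j ∈ G ↔
      Relation.ReflTransGen
        (fun a b => (((a, b) ∈ E) ∨ ((b, a) ∈ E)) ∧ w a = w b) i j) :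
    w i = (1 / (G.card : ℝ)) * ∑ j ∈ G,
      (x j
        + lam * ∑ e ∈ E.filter (fun e => e.2 = j ∧ e.1 ∉ G), Real.sign (w e.1 - w e.2)
        - lam * ∑ e ∈ E.filter (fun e => e.1 = j ∧ e.2 ∉ G), Real.sign (w e.1 - w e.2)) := by
  classical
  have hiG : i ∈ G := (hG i).2 Relation.ReflTransGen.refl
  have hcard : 0 < G.card := Finset.card_pos.mpr ⟨i, hiG⟩
  have hconst : ∀ j ∈ G, w j = w i := by
    intro j hj
    have h := (hG j).1 hj
    clear hj
    induction h with
    | refl => rfl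
    | tail _ h2 ih => rw [← h2.2]; exact ih
  -- boundary edges have distinct values
  have hbd : ∀ e ∈ E, ¬(e.1 ∈ G ↔ e.2 ∈ G) → w e.1 ≠ w e.2 := by
    intro e he hne heq
    apply hne
    constructor
    · intro h1
      refine (hG e.2).2 (Relation.ReflTransGen.tail ((hG e.1).1 h1) ⟨Or.inl ?_, heq⟩)
      simpa using he
    · intro h2
      refine (hG e.1).2 (Relation.ReflTransGen.tail ((hG e.2).1 h2) ⟨Or.inr ?_, heq.symm⟩)
      simpa using he
  -- a uniform positive gap on boundary edges
  obtain ⟨δ, hδ0, hδ⟩ : ∃ δ > 0, ∀ e ∈ E, ¬(e.1 ∈ G ↔ e.2 ∈ G) → δ ≤ |w e.1 - w e.2| := by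
    rcases (E.filter (fun e => ¬(e.1 ∈ G ↔ e.2 ∈ G))).eq_empty_or_nonempty with h | h
    · refine ⟨1, one_pos, fun e he hne => ?_⟩
      exact absurd hne (Finset.filter_eq_empty_iff.mp h he)
    · refine ⟨(E.filter (fun e => ¬(e.1 ∈ G ↔ e.2 ∈ G))).inf' h
        (fun e => |w e.1 - w e.2|), ?_, ?_⟩
      · rw [gt_iff_lt, Finset.lt_inf'_iff]
        intro e he
        obtain ⟨he1, he2⟩ := Finset.mem_filter.mp he
        exact abs_pos.mpr (sub_ne_zero.mpr (hbd e he1 he2))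
      · intro e he hne
        exact Finset.inf'_le _ (Finset.mem_filter.2 ⟨he, hne⟩)
  set sg : Fin k × Fin k → ℝ := fun e => Real.sign (w e.1 - w e.2) with hsg
  set Sout := ∑ e ∈ E.filter (fun e => e.1 ∈ G ∧ e.2 ∉ G), sg e with hSout
  set Sin := ∑ e ∈ E.filter (fun e => e.2 ∈ G ∧ e.1 ∉ G), sg e with hSin
  set B := (∑ j ∈ G, (w j - x j)) + lam * (Sout - Sin) with hBdef
  -- key perturbation inequality
  have key : ∀ t : ℝ, |t| ≤ δ → 0 ≤ t * B + t ^ 2 * (G.card : ℝ) / 2 := by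
    intro t ht
    have h := hw (fun j => if j ∈ G then w j + t else w j)
    have hq : ∑ j, ((if j ∈ G then w j + t else w j) - x j) ^ 2
        = ∑ j, (w j - x j) ^ 2 + (2 * t * ∑ j ∈ G, (w j - x j) + t ^ 2 * G.card) := by
      have h1 : ∀ j : Fin k, ((if j ∈ G then w j + t else w j) - x j) ^ 2
          = (w j - x j) ^ 2 + (if j ∈ G then 2 * t * (w j - x j) + t ^ 2 else 0) := by
        intro j; split_ifs <;> ring
      rw [Finset.sum_congr rfl (fun j _ => h1 j), Finset.sum_add_distrib]
      congr 1
      rw [Finset.sum_ite_mem, Finset.univ_inter, Finset.sum_add_distrib,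
        ← Finset.mul_sum, Finset.sum_const, nsmul_eq_mul]
      ring
    have hes : ∑ e ∈ E, |(if e.1 ∈ G then w e.1 + t else w e.1)
          - (if e.2 ∈ G then w e.2 + t else w e.2)|
        = ∑ e ∈ E, |w e.1 - w e.2| + t * (Sout - Sin) := by
      have hper : ∀ e ∈ E,
          |(if e.1 ∈ G then w e.1 + t else w e.1)
            - (if e.2 ∈ G then w e.2 + t else w e.2)|
          = |w e.1 - w e.2| + ((if e.1 ∈ G ∧ e.2 ∉ G then t * sg e else 0)
            + (if e.2 ∈ G ∧ e.1 ∉ G then -t * sg e else 0)) := by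
        intro e he
        by_cases h1 : e.1 ∈ G <;> by_cases h2 : e.2 ∈ G
        · simp only [h1, h2, if_true, if_pos]
          simp [h1, h2]
        · have hd : w e.1 - w e.2 ≠ 0 := sub_ne_zero.mpr (hbd e he (by simp [h1, h2]))
          have hle : |t| ≤ |w e.1 - w e.2| := ht.trans (hδ e he (by simp [h1, h2]))
          simp only [h1, h2, if_true, if_false, not_false_iff, and_true, true_and,
            and_false, false_and, if_neg (fun hc : e.2 ∈ G ∧ e.1 ∉ G => hc.2 h1)]
          rw [show w e.1 + t - w e.2 = (w e.1 - w e.2) + t by ring,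
            abs_lin_aux _ t hd hle]
          simp [hsg]
        · have hd : w e.1 - w e.2 ≠ 0 := sub_ne_zero.mpr (hbd e he (by simp [h1, h2]))
          have hle : |(-t)| ≤ |w e.1 - w e.2| := by
            rw [abs_neg]; exact ht.trans (hδ e he (by simp [h1, h2]))
          simp only [h1, h2, if_false, if_true, not_true, and_false, false_and,
            not_false_iff, and_true, true_and]
          rw [show w e.1 - (w e.2 + t) = (w e.1 - w e.2) + (-t) by ring,
            abs_lin_aux _ (-t) hd hle]
          simp [hsg]
        · simp [h1, h2]
      rw [Finset.sum_congr rfl hper, Finset.sum_add_distrib]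
      congr 1
      rw [Finset.sum_add_distrib, ← Finset.sum_filter, ← Finset.sum_filter,
        ← Finset.mul_sum, ← Finset.mul_sum, ← hSout, ← hSin]
      ring
    rw [hq, hes] at h
    rw [hBdef]
    nlinarith [h]
  -- conclude B = 0
  have hB : B = 0 := by
    have habs : ∀ t : ℝ, 0 < t → t ≤ δ → |B| ≤ t * (G.card : ℝ) / 2 := by
      intro t ht0 htδ
      have h1 := key t (by rw [abs_of_pos ht0]; exact htδ)
      have h2 := key (-t) (by rw [abs_neg, abs_of_pos ht0]; exact htδ)
      rw [abs_le]
      constructor <;> nlinarith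
    have hle : |B| ≤ 0 := by
      apply le_of_forall_pos_le_add
      intro ε hε
      set c2 : ℝ := (G.card : ℝ) / 2 with hc2
      have hc2' : (0:ℝ) ≤ c2 := by positivity
      have ht0 : 0 < min δ (ε / (c2 + 1)) := lt_min hδ0 (by positivity)
      have h := habs _ ht0 (min_le_left _ _)
      have h2 : min δ (ε / (c2 + 1)) ≤ ε / (c2 + 1) := min_le_right _ _
      have h3 : (ε / (c2 + 1)) * c2 ≤ ε := by
        rw [div_mul_eq_mul_div, div_le_iff₀ (by positivity)]
        nlinarith
      rw [zero_add]
      calc |B| ≤ min δ (ε / (c2 + 1)) * (G.card : ℝ) / 2 := h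
        _ = min δ (ε / (c2 + 1)) * c2 := by rw [hc2]; ring
        _ ≤ (ε / (c2 + 1)) * c2 := by nlinarith
        _ ≤ ε := h3
    exact abs_nonpos_iff.mp hle
  -- fiber lemma
  have fiber : ∀ (p q : Fin k × Fin k → Fin k),
      ∑ j ∈ G, ∑ e ∈ E.filter (fun e => p e = j ∧ q e ∉ G), sg e
        = ∑ e ∈ E.filter (fun e => p e ∈ G ∧ q e ∉ G), sg e := by
    intro p q
    simp only [Finset.sum_filter]
    rw [Finset.sum_comm]
    refine Finset.sum_congr rfl fun e _ => ?_
    by_cases hq : q e ∈ G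
    · simp [hq]
    · simp only [hq, not_false_iff, and_true]
      have : ∀ j ∈ G, (if p e = j then sg e else 0) = (if p e = j then sg e else 0) := fun _ _ => rfl
      rw [show (∑ j ∈ G, if p e = j then sg e else 0)
          = ∑ j ∈ G, if p e = j then (fun _ => sg e) j else 0 from rfl,
        Finset.sum_ite_eq G (p e) (fun _ => sg e)]
  -- final assembly
  have hsum : ∑ j ∈ G, w j = (G.card : ℝ) * w i := by
    rw [Finset.sum_congr rfl hconst, Finset.sum_const, nsmul_eq_mul]
  have hfinal : ∑ j ∈ G,
      (x j + lam * ∑ e ∈ E.filter (fun e => e.2 = j ∧ e.1 ∉ G), Real.sign (w e.1 - w e.2)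
        - lam * ∑ e ∈ E.filter (fun e => e.1 = j ∧ e.2 ∉ G), Real.sign (w e.1 - w e.2))
      = (G.card : ℝ) * w i := by
    have e1 := fiber Prod.snd Prod.fst
    have e2 := fiber Prod.fst Prod.snd
    have expand : ∑ j ∈ G,
        (x j + lam * ∑ e ∈ E.filter (fun e => e.2 = j ∧ e.1 ∉ G), Real.sign (w e.1 - w e.2)
          - lam * ∑ e ∈ E.filter (fun e => e.1 = j ∧ e.2 ∉ G), Real.sign (w e.1 - w e.2))
        = ∑ j ∈ G, x j + lam * Sin - lam * Sout := by
      rw [Finset.sum_sub_distrib, Finset.sum_add_distrib, ← Finset.mul_sum, ← Finset.mul_sum]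
      rw [hsg] at e1 e2
      simp only at e1 e2
      rw [e1, e2, ← hSin, ← hSout]
    rw [expand]
    have hB' : (∑ j ∈ G, (w j - x j)) + lam * (Sout - Sin) = 0 := by rw [← hBdef]; exact hB
    rw [Finset.sum_sub_distrib] at hB'
    rw [← hsum]
    linarith
  rw [hfinal]
  field_simp
end

section
/- The Jacobian of sparsemax at a point z where the support S = {j : sparsemax(z)_j > 0} is stable equals diag(s) − (1/||s||_1) s sᵀ, where s is the 0/1 indicator vector of S. -/
open Finset

/-- Uniqueness of the Euclidean projection onto the simplex. -/
lemma sparsemax_min_unique {k : ℕ} (z q q' : Fin k → ℝ)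
    (hq0 : ∀ i, 0 ≤ q i) (hq1 : ∑ i, q i = 1)
    (hq'0 : ∀ i, 0 ≤ q' i) (hq'1 : ∑ i, q' i = 1)
    (hmin : ∀ r : Fin k → ℝ, ((∀ i, 0 ≤ r i) ∧ ∑ i, r i = 1) →
      (1/2) * ∑ i, (q i - z i)^2 ≤ (1/2) * ∑ i, (r i - z i)^2)
    (hmin' : ∀ r : Fin k → ℝ, ((∀ i, 0 ≤ r i) ∧ ∑ i, r i = 1) →
      (1/2) * ∑ i, (q' i - z i)^2 ≤ (1/2) * ∑ i, (r i - z i)^2) :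
    ∀ i, q i = q' i := by
  set m : Fin k → ℝ := fun i => (q i + q' i) / 2 with hm
  have hmfeas : (∀ i, 0 ≤ m i) ∧ ∑ i, m i = 1 := by
    constructor
    · intro i
      have := hq0 i; have := hq'0 i
      simp only [hm]; linarith
    · simp only [hm]
      have h : ∑ i, (q i + q' i) / 2 = (∑ i, q i + ∑ i, q' i) / 2 := by
        rw [← Finset.sum_add_distrib, Finset.sum_div]
      rw [h, hq1, hq'1]; norm_num
  have h1 := hmin q' ⟨hq'0, hq'1⟩
  have h2 := hmin' q ⟨hq0, hq1⟩
  have h3 := hmin m hmfeas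
  have key : ∑ i, (q i - q' i)^2 =
      2 * ∑ i, (q i - z i)^2 + 2 * ∑ i, (q' i - z i)^2 - 4 * ∑ i, (m i - z i)^2 := by
    rw [Finset.mul_sum, Finset.mul_sum, Finset.mul_sum, ← Finset.sum_add_distrib,
      ← Finset.sum_sub_distrib]
    refine Finset.sum_congr rfl fun i _ => ?_
    simp only [hm]; ring
  have hle : ∑ i, (q i - q' i)^2 ≤ 0 := by linarith
  intro i
  have hnn : ∀ j ∈ Finset.univ, (0:ℝ) ≤ (q j - q' j)^2 := fun j _ => sq_nonneg _
  have hz : ∑ i, (q i - q' i)^2 = 0 :=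
    le_antisymm hle (Finset.sum_nonneg hnn)
  have := (Finset.sum_eq_zero_iff_of_nonneg hnn).mp hz i (Finset.mem_univ i)
  have := sq_eq_zero_iff.mp this
  linarith [this]

/-- A threshold-form feasible point is a minimizer. -/
lemma sparsemax_thr_min {k : ℕ} (z q : Fin k → ℝ) (τ : ℝ)
    (hq : ∀ i, q i = max (z i - τ) 0) (hs : ∑ i, q i = 1)
    (r : Fin k → ℝ) (hr0 : ∀ i, 0 ≤ r i) (hr1 : ∑ i, r i = 1) :
    (1/2) * ∑ i, (q i - z i)^2 ≤ (1/2) * ∑ i, (r i - z i)^2 := by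
  have pt : ∀ i, (q i - z i)^2 + (r i - q i)^2 - 2*τ*(r i - q i) ≤ (r i - z i)^2 := by
    intro i
    rcases le_or_gt (z i - τ) 0 with h | h
    · have hq0 : q i = 0 := by rw [hq i, max_eq_right h]
      have := hr0 i
      nlinarith [mul_nonneg (hr0 i) (neg_nonneg.mpr h)]
    · have hq0 : q i = z i - τ := by rw [hq i, max_eq_left h.le]
      have : (r i - z i)^2 = (q i - z i)^2 + (r i - q i)^2 - 2*τ*(r i - q i) := by
        rw [hq0]; ring
      linarith
  have hsum : ∑ i, ((q i - z i)^2 + (r i - q i)^2 - 2*τ*(r i - q i)) ≤ ∑ i, (r i - z i)^2 :=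
    Finset.sum_le_sum (fun i _ => pt i)
  have hexp : ∑ i, ((q i - z i)^2 + (r i - q i)^2 - 2*τ*(r i - q i)) =
      ∑ i, (q i - z i)^2 + ∑ i, (r i - q i)^2 - 2*τ*(∑ i, r i - ∑ i, q i) := by
    rw [Finset.sum_sub_distrib, Finset.sum_add_distrib, ← Finset.mul_sum, Finset.sum_sub_distrib]
  have hsq : 0 ≤ ∑ i, (r i - q i)^2 := Finset.sum_nonneg fun i _ => sq_nonneg _
  rw [hexp, hr1, hs] at hsum
  linarith

/-- The Jacobian of sparsemax at a point `z` with stable support `S` equals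
`diag(s) − (1/‖s‖₁) s sᵀ` where `s` is the indicator of `S`; equivalently, sparsemax
is locally affine with this linear part. -/
theorem sparsemax_jacobian {k : ℕ} (z p : Fin k → ℝ) (τ : ℝ)
    (hp : ((∀ i, 0 ≤ p i) ∧ ∑ i, p i = 1) ∧
      ∀ q : Fin k → ℝ, ((∀ i, 0 ≤ q i) ∧ ∑ i, q i = 1) →
        (1 / 2) * ∑ i, (p i - z i) ^ 2 ≤ (1 / 2) * ∑ i, (q i - z i) ^ 2)
    (hthr : ∀ i, p i = max (z i - τ) 0)
    (hstab : ∀ j, p j = 0 → z j - τ < 0) :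
    ∃ ε > (0 : ℝ), ∀ z' q : Fin k → ℝ,
      Real.sqrt (∑ i, (z' i - z i) ^ 2) < ε →
      (((∀ i, 0 ≤ q i) ∧ ∑ i, q i = 1) ∧
        ∀ r : Fin k → ℝ, ((∀ i, 0 ≤ r i) ∧ ∑ i, r i = 1) →
          (1 / 2) * ∑ i, (q i - z' i) ^ 2 ≤ (1 / 2) * ∑ i, (r i - z' i) ^ 2) →
      ∀ i, q i = p i +
        ((if 0 < p i then (1 : ℝ) else 0) * (z' i - z i)
          - (1 / ((Finset.univ.filter fun j => 0 < p j).card : ℝ)) *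
            (if 0 < p i then (1 : ℝ) else 0) *
              ∑ j ∈ Finset.univ.filter (fun j => 0 < p j), (z' j - z j)) := by
  obtain ⟨⟨hp0, hp1⟩, hpmin⟩ := hp
  -- k ≠ 0
  rcases Nat.eq_zero_or_pos k with hk | hk
  · subst hk; simp at hp1
  have hne : Nonempty (Fin k) := ⟨⟨0, hk⟩⟩
  set S : Finset (Fin k) := Finset.univ.filter (fun j => 0 < p j) with hS
  -- S is nonempty
  have hSne : S.Nonempty := by
    by_contra h
    rw [Finset.not_nonempty_iff_eq_empty] at h
    have : ∑ i, p i = 0 := by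
      refine Finset.sum_eq_zero fun i _ => ?_
      by_contra hpi
      have : 0 < p i := lt_of_le_of_ne (hp0 i) (Ne.symm hpi)
      have : i ∈ S := by simp [hS, this]
      simp [h] at this
    rw [this] at hp1; norm_num at hp1
  have hn0 : (0:ℝ) < (S.card : ℝ) := by
    exact_mod_cast Nat.cast_pos.mpr (Finset.card_pos.mpr hSne)
  -- facts about p on and off S
  have hin : ∀ i, 0 < p i → p i = z i - τ := by
    intro i hi
    rcases le_or_gt (z i - τ) 0 with h | h
    · rw [hthr i, max_eq_right h] at hi; exact absurd hi (lt_irrefl 0)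
    · rw [hthr i, max_eq_left h.le]
  have hout : ∀ i, ¬ 0 < p i → p i = 0 ∧ z i - τ < 0 := by
    intro i hi
    have hpi : p i = 0 := le_antisymm (not_lt.mp hi) (hp0 i)
    exact ⟨hpi, hstab i hpi⟩
  -- choose ε
  set c : Fin k → ℝ := fun i => if 0 < p i then p i / 2 else (τ - z i) / 2 with hc
  set ε : ℝ := Finset.univ.inf' Finset.univ_nonempty c with hε
  have hεpos : 0 < ε := by
    rw [hε, Finset.lt_inf'_iff]
    intro i _
    simp only [hc]
    split_ifs with h
    · linarith
    · have := (hout i h).2; linarith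
  have hεle : ∀ i, ε ≤ c i := fun i => Finset.inf'_le _ (Finset.mem_univ i)
  refine ⟨ε, hεpos, ?_⟩
  intro z' q hz' ⟨⟨hq0, hq1⟩, hqmin⟩
  set δ : Fin k → ℝ := fun i => z' i - z i with hδ
  -- componentwise bound
  have habs : ∀ i, |δ i| < ε := by
    intro i
    have h1 : (δ i)^2 ≤ ∑ j, (z' j - z j)^2 := by
      have := Finset.single_le_sum (f := fun j => (z' j - z j)^2)
        (fun j _ => sq_nonneg _) (Finset.mem_univ i)
      simpa [hδ] using this
    have h2 : |δ i| ≤ Real.sqrt (∑ j, (z' j - z j)^2) := by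
      rw [← Real.sqrt_sq_eq_abs]
      exact Real.sqrt_le_sqrt h1
    linarith
  set Sd : ℝ := ∑ j ∈ S, δ j with hSd
  have hSgabs : |Sd| < (S.card : ℝ) * ε := by
    calc |Sd| ≤ ∑ j ∈ S, |δ j| := Finset.abs_sum_le_sum_abs _ _
    _ < ∑ _j ∈ S, ε := Finset.sum_lt_sum_of_nonempty hSne (fun j _ => habs j)
    _ = (S.card : ℝ) * ε := by rw [Finset.sum_const, nsmul_eq_mul]
  have hSglt : Sd / (S.card : ℝ) < ε := by
    rw [div_lt_iff₀ hn0]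
    calc Sd ≤ |Sd| := le_abs_self _
    _ < (S.card : ℝ) * ε := hSgabs
    _ = ε * (S.card : ℝ) := mul_comm _ _
  have hSggt : -ε < Sd / (S.card : ℝ) := by
    rw [lt_div_iff₀ hn0]
    have : -((S.card:ℝ) * ε) < Sd := by
      have := neg_lt_of_abs_lt hSgabs
      linarith
    linarith [this]
  -- the candidate minimizer
  set q' : Fin k → ℝ := fun i => p i +
      ((if 0 < p i then (1 : ℝ) else 0) * (z' i - z i)
        - (1 / (S.card : ℝ)) * (if 0 < p i then (1 : ℝ) else 0) * Sd) with hq'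
  set τ' : ℝ := τ + Sd / (S.card : ℝ) with hτ'
  clear_value ε c δ Sd q' τ'
  -- q' has threshold form
  have hq'in : ∀ i, 0 < p i → q' i = p i + δ i - Sd / (S.card : ℝ) := by
    intro i hi
    simp only [hq', if_pos hi, hδ]
    ring
  have hq'out : ∀ i, ¬ 0 < p i → q' i = 0 := by
    intro i hi
    simp only [hq', if_neg hi]
    rw [(hout i hi).1]
    ring
  have hq'pos : ∀ i, 0 < p i → 0 < q' i := by
    intro i hi
    rw [hq'in i hi]
    have h1 : ε ≤ p i / 2 := by have := hεle i; simp only [hc, if_pos hi] at this; exact this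
    have h2 := (abs_lt.mp (habs i)).1
    linarith
  have hthr' : ∀ i, q' i = max (z' i - τ') 0 := by
    intro i
    rcases lt_or_ge 0 (p i) with hi | hi
    · have he : q' i = z' i - τ' := by
        rw [hq'in i hi, hin i hi, hτ', hδ]; ring
      have hpos := hq'pos i hi
      rw [he] at hpos ⊢
      exact (max_eq_left hpos.le).symm
    · have hi' : ¬ 0 < p i := not_lt.mpr hi
      rw [hq'out i hi']
      have h1 : ε ≤ (τ - z i) / 2 := by
        have := hεle i; simp only [hc, if_neg hi'] at this; exact this
      have h2 := (abs_lt.mp (habs i)).2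
      have : z' i - τ' < 0 := by
        have hz : z' i = z i + δ i := by simp [hδ]
        rw [hz, hτ']
        have := hSggt
        linarith
      rw [max_eq_right this.le]
  -- sum of q' is 1
  have hq'sum : ∑ i, q' i = 1 := by
    have he : ∀ i, q' i = p i + (if 0 < p i then δ i - Sd / (S.card : ℝ) else 0) := by
      intro i
      simp only [hq', hδ]
      split_ifs with h
      · ring
      · ring
    calc ∑ i, q' i = ∑ i, (p i + (if 0 < p i then δ i - Sd / (S.card : ℝ) else 0)) :=
          Finset.sum_congr rfl fun i _ => he i
    _ = ∑ i, p i + ∑ i, (if 0 < p i then δ i - Sd / (S.card : ℝ) else 0) :=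
          Finset.sum_add_distrib
    _ = 1 + ∑ i ∈ S, (δ i - Sd / (S.card : ℝ)) := by
          rw [hp1, Finset.sum_filter]
    _ = 1 + (Sd - (S.card : ℝ) * (Sd / (S.card : ℝ))) := by
          rw [Finset.sum_sub_distrib, Finset.sum_const, nsmul_eq_mul, hSd]
    _ = 1 := by
          rw [mul_div_cancel₀ _ (ne_of_gt hn0)]; ring
  -- q' is nonneg
  have hq'0 : ∀ i, 0 ≤ q' i := by
    intro i
    rcases lt_or_ge 0 (p i) with hi | hi
    · exact (hq'pos i hi).le
    · rw [hq'out i (not_lt.mpr hi)]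
  -- q' is a minimizer, hence q = q'
  have hmin' : ∀ r : Fin k → ℝ, ((∀ i, 0 ≤ r i) ∧ ∑ i, r i = 1) →
      (1/2) * ∑ i, (q' i - z' i)^2 ≤ (1/2) * ∑ i, (r i - z' i)^2 := by
    intro r ⟨hr0, hr1⟩
    exact sparsemax_thr_min z' q' τ' hthr' hq'sum r hr0 hr1
  have huniq := sparsemax_min_unique z' q q' hq0 hq1 hq'0 hq'sum hqmin hmin'
  intro i
  simpa only [hq'] using huniq i
end

section
/- For the chain graph (1D total variation) with penalty Ω(w) = Σ_{i=1}^{k−1}|w_{i+1} − w_i|, if λ ≥ (max_i x_i − min_i x_i)·k/2 is sufficiently large, then prox_{λΩ}(x) is the constant vector with all entries equal to the mean of x. In particular, for any λ ≥ Σ_i |x_i − mean(x)|, the output is the constant mean vector. -/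
/-!
The constant vector `c = mean x` beats every `v` by at least `½ ‖v - c‖²`. Expanding the square,
the only term that can favour `v` is the correlation `∑ (x i - c) v i`; since the deviations
`x i - c` sum to zero it equals `∑ (x i - c) (v i - v 0)`, and `|v i - v 0| ≤ Ω v` by the triangle
inequality along the chain, so it is at most `(∑ |x i - c|) Ω v ≤ λ Ω v`. A minimiser `w` therefore
satisfies `½ ‖w - c‖² ≤ 0`.
-/

open Finset

theorem dist_le_sum_dist_succ_castSucc {α : Type*} [PseudoMetricSpace α] :
    ∀ {k : ℕ} (v : Fin (k + 1) → α) (i : Fin (k + 1)),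
      dist (v i) (v 0) ≤ ∑ j : Fin k, dist (v j.succ) (v j.castSucc)
  | 0, v, i => by simp [Fin.fin_one_eq_zero i]
  | k + 1, v, i => by
    have hinit : ∀ i' : Fin (k + 1), dist (v i'.castSucc) (v 0) ≤
        ∑ j : Fin k, dist (v j.castSucc.succ) (v j.castSucc.castSucc) :=
      dist_le_sum_dist_succ_castSucc (fun i' => v i'.castSucc)
    rw [Fin.sum_univ_castSucc]
    induction i using Fin.lastCases with
    | last =>
      exact (dist_triangle _ (v (Fin.last k).castSucc) _).trans
        ((add_comm _ _).trans_le (add_le_add_left (hinit _) _))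
    | cast i' => exact le_add_of_le_of_nonneg (hinit i') dist_nonneg

section

variable {k : ℕ}

def chainTV (v : Fin (k + 1) → ℝ) : ℝ :=
  ∑ i : Fin k, |v i.succ - v i.castSucc|

noncomputable def tvProxObjective (x : Fin (k + 1) → ℝ) (lam : ℝ) (u : Fin (k + 1) → ℝ) : ℝ :=
  (1 / 2) * ∑ i, (u i - x i) ^ 2 + lam * chainTV u

theorem chainTV_nonneg (v : Fin (k + 1) → ℝ) : 0 ≤ chainTV v :=
  sum_nonneg fun _ _ => abs_nonneg _

@[simp]
theorem chainTV_const (c : ℝ) : chainTV (fun _ : Fin (k + 1) => c) = 0 := by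
  simp [chainTV]

theorem abs_sub_le_chainTV (v : Fin (k + 1) → ℝ) (i : Fin (k + 1)) :
    |v i - v 0| ≤ chainTV v := by
  simpa only [Real.dist_eq, chainTV] using dist_le_sum_dist_succ_castSucc v i

theorem sum_mul_le_sum_abs_mul_chainTV (a v : Fin (k + 1) → ℝ) (ha : ∑ i, a i = 0) :
    ∑ i, a i * v i ≤ (∑ i, |a i|) * chainTV v :=
  calc ∑ i, a i * v i = ∑ i, a i * (v i - v 0) := by
        simp only [mul_sub, sum_sub_distrib, ← sum_mul, ha, zero_mul, sub_zero]
    _ ≤ ∑ i, |a i| * chainTV v := sum_le_sum fun i _ =>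
        (le_abs_self _).trans <| (abs_mul _ _).trans_le <|
          mul_le_mul_of_nonneg_left (abs_sub_le_chainTV v i) (abs_nonneg _)
    _ = (∑ i, |a i|) * chainTV v := (sum_mul _ _ _).symm

theorem tvProxObjective_const_add_le (x : Fin (k + 1) → ℝ) (lam c : ℝ)
    (hc : ∑ i, (x i - c) = 0) (hlam : ∑ i, |x i - c| ≤ lam) (v : Fin (k + 1) → ℝ) :
    tvProxObjective x lam (fun _ => c) + (1 / 2) * ∑ i, (v i - c) ^ 2 ≤
      tvProxObjective x lam v := by
  have hsplit : ∑ i, (v i - x i) ^ 2 = ∑ i, (c - x i) ^ 2 + ∑ i, (v i - c) ^ 2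
      - 2 * ∑ i, (x i - c) * v i + 2 * c * ∑ i, (x i - c) := by
    simp only [mul_sum, ← sum_add_distrib, ← sum_sub_distrib]
    exact sum_congr rfl fun i _ => by ring
  have hcorr := sum_mul_le_sum_abs_mul_chainTV (fun i => x i - c) v hc
  have hpen := mul_le_mul_of_nonneg_right hlam (chainTV_nonneg v)
  simp only [tvProxObjective, chainTV_const, mul_zero, add_zero]
  rw [hsplit, hc]
  linarith

theorem sum_sub_div_eq_zero (x : Fin (k + 1) → ℝ) :
    ∑ i, (x i - (∑ j, x j) / (k + 1)) = 0 := by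
  rw [sum_sub_distrib, sum_const, card_univ, Fintype.card_fin, nsmul_eq_mul]
  push_cast
  field_simp
  ring

end

/-- Complete fusion of the 1D total variation prox for large `λ`: if
`λ ≥ ∑_i |x_i − mean(x)|`, then `prox_{λΩ}(x)` is the constant vector with all
entries equal to the mean of `x`, where `Ω(w) = ∑_{i=1}^{k-1} |w_{i+1} − w_i|`. -/
theorem tv1d_prox_full_fusion {k : ℕ} (x : Fin (k + 1) → ℝ) (lam : ℝ)
    (hlam : (∑ i, |x i - (∑ j, x j) / (k + 1)|) ≤ lam) (w : Fin (k + 1) → ℝ)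
    (hw : ∀ u : Fin (k + 1) → ℝ,
      (1 / 2) * ∑ i, (w i - x i) ^ 2
          + lam * ∑ i : Fin k, |w i.succ - w i.castSucc| ≤
      (1 / 2) * ∑ i, (u i - x i) ^ 2
          + lam * ∑ i : Fin k, |u i.succ - u i.castSucc|) :
    ∀ i, w i = (∑ j, x j) / (k + 1) := by
  set m : ℝ := (∑ j, x j) / (k + 1)
  have hmin : tvProxObjective x lam w ≤ tvProxObjective x lam (fun _ => m) := hw _
  have hgap := tvProxObjective_const_add_le x lam m (sum_sub_div_eq_zero x) hlam w
  have hdev : ∑ i, (w i - m) ^ 2 = 0 :=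
    le_antisymm (by linarith) (sum_nonneg fun i _ => sq_nonneg _)
  intro i
  rw [← sub_eq_zero, ← pow_eq_zero_iff two_ne_zero]
  exact (sum_eq_zero_iff_of_nonneg fun i _ => sq_nonneg (w i - m)).mp hdev i (mem_univ i)
end
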